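/- arXiv:0709.1689 — 2 statements merged into one kernel-verified Lean document; each statement's English description precedes it below -/
import Mathlib

section
/- Let G be a group and let k, l, m be positive integers. If x ∈ G^(k), y ∈ G^(m), z ∈ G^(l), then the Jacobi–Witt–Hall product [x,[y,z]] · [y,[z,x]] · [z,[x,y]] lies in G^(k+l+m+1). -/
open scoped commutatorElement

/-- Three subgroups lemma relative to a normal subgroup `N`. -/
theorem stmt3_three_subgroups {G : Type*} [Group G] {H₁ H₂ H₃ N : Subgroup G} [N.Normal]
    (h1 : ⁅⁅H₂, H₃⁆, H₁⁆ ≤ N) (h2 : ⁅⁅H₃, H₁⁆, H₂⁆ ≤ N) : ⁅⁅H₁, H₂⁆, H₃⁆ ≤ N := by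
  have key : ∀ A B C : Subgroup G, ⁅⁅A, B⁆, C⁆ ≤ N ↔
      ⁅⁅A.map (QuotientGroup.mk' N), B.map (QuotientGroup.mk' N)⁆,
        C.map (QuotientGroup.mk' N)⁆ = ⊥ := by
    intro A B C
    rw [← Subgroup.map_commutator, ← Subgroup.map_commutator, Subgroup.map_eq_bot_iff,
      QuotientGroup.ker_mk']
  rw [key] at h1 h2 ⊢
  exact Subgroup.commutator_commutator_eq_bot_of_rotate h1 h2

theorem stmt3_lcs_succ {G : Type*} [Group G] (n : ℕ) :
    (⊤ : Subgroup G).lowerCentralSeries (n + 1) = ⁅(⊤ : Subgroup G).lowerCentralSeries n, (⊤ : Subgroup G)⁆ := rfl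

/-- `⁅γᵢ(G), γⱼ(G)⁆ ≤ γ_{i+j+1}(G)` (0-indexed lower central series). -/
theorem stmt3_lcs_comm {G : Type*} [Group G] (j i : ℕ) :
    ⁅(⊤ : Subgroup G).lowerCentralSeries i, (⊤ : Subgroup G).lowerCentralSeries j⁆ ≤ (⊤ : Subgroup G).lowerCentralSeries (i + j + 1) := by
  induction j generalizing i with
  | zero =>
    rw [Subgroup.lowerCentralSeries_zero]
    exact (stmt3_lcs_succ i).ge
  | succ j ih =>
    rw [Subgroup.commutator_comm, stmt3_lcs_succ]
    apply stmt3_three_subgroups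
    · calc ⁅⁅(⊤ : Subgroup G), (⊤ : Subgroup G).lowerCentralSeries i⁆, (⊤ : Subgroup G).lowerCentralSeries j⁆
          = ⁅(⊤ : Subgroup G).lowerCentralSeries (i + 1), (⊤ : Subgroup G).lowerCentralSeries j⁆ := by
            rw [Subgroup.commutator_comm (⊤ : Subgroup G), ← stmt3_lcs_succ]
        _ ≤ (⊤ : Subgroup G).lowerCentralSeries (i + 1 + j + 1) := ih (i + 1)
        _ = (⊤ : Subgroup G).lowerCentralSeries (i + (j + 1) + 1) := by
            rw [show i + 1 + j + 1 = i + (j + 1) + 1 by omega]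
    · calc ⁅⁅(⊤ : Subgroup G).lowerCentralSeries i, (⊤ : Subgroup G).lowerCentralSeries j⁆, (⊤ : Subgroup G)⁆
          ≤ ⁅(⊤ : Subgroup G).lowerCentralSeries (i + j + 1), (⊤ : Subgroup G)⁆ :=
            Subgroup.commutator_mono (ih i) le_rfl
        _ = (⊤ : Subgroup G).lowerCentralSeries (i + j + 1 + 1) := (stmt3_lcs_succ (i + j + 1)).symm
        _ = (⊤ : Subgroup G).lowerCentralSeries (i + (j + 1) + 1) := by
            rw [show i + j + 1 + 1 = i + (j + 1) + 1 by omega]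

/-- Reduction: strip the inner inverse off a triple commutator, modulo central terms. -/
theorem stmt3_red {Q : Type*} [Group Q] (a b c : Q)
    (h1 : ⁅a, ⁅⁅b, c⁆, b⁻¹⁆⁆ = 1) (h2 : ⁅⁅b, c⁆, ⁅a, ⁅b, c⁆⁆⁆ = 1) :
    ⁅a, ⁅b⁻¹, c⁆⁆ = ⁅a, ⁅b, c⁆⁆⁻¹ := by
  have e1 : ⁅b⁻¹, c⁆ = ⁅b, c⁆⁻¹ * ⁅⁅b, c⁆, b⁻¹⁆ := by
    simp only [commutatorElement_def]; group
  have e2 : ∀ u v w : Q, ⁅u, v * w⁆ = ⁅u, v⁆ * (v * ⁅u, w⁆ * v⁻¹) := by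
    intros; simp only [commutatorElement_def]; group
  have e3 : ⁅a, ⁅b, c⁆⁻¹⁆ = ⁅b, c⁆⁻¹ * ⁅a, ⁅b, c⁆⁆⁻¹ * ⁅b, c⁆ := by
    simp only [commutatorElement_def]; group
  have hcomm : Commute ⁅b, c⁆ ⁅a, ⁅b, c⁆⁆ :=
    commutatorElement_eq_one_iff_commute.mp h2
  rw [e1, e2, h1, mul_one, e3]
  rw [(hcomm.inv_right.inv_left).eq]
  group

/-- The exact Hall–Witt identity used below. -/
theorem stmt3_hw {Q : Type*} [Group Q] (x y z : Q) :
    (y * ⁅x, ⁅y⁻¹, z⁆⁆ * y⁻¹) * (z * ⁅y, ⁅z⁻¹, x⁆⁆ * z⁻¹) *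
      (x * ⁅z, ⁅x⁻¹, y⁆⁆ * x⁻¹) = 1 := by
  simp only [commutatorElement_def]; group

/-- (Jacobi–Witt–Hall) If `x ∈ G^(k)`, `y ∈ G^(m)`, `z ∈ G^(l)` then
`[x,[y,z]] · [y,[z,x]] · [z,[x,y]] ∈ G^(k+l+m+1)`.  The paper's `G^(n)` is
`(⊤ : Subgroup G).lowerCentralSeries (n-1)`, so `G^(k+l+m+1)` is `(⊤ : Subgroup G).lowerCentralSeries (k+l+m)`. -/
theorem stmt_3 {G : Type*} [Group G] (k l m : ℕ) (hk : 1 ≤ k) (hl : 1 ≤ l) (hm : 1 ≤ m)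
    (x y z : G) (hx : x ∈ (⊤ : Subgroup G).lowerCentralSeries (k - 1))
    (hy : y ∈ (⊤ : Subgroup G).lowerCentralSeries (m - 1)) (hz : z ∈ (⊤ : Subgroup G).lowerCentralSeries (l - 1)) :
    ⁅x, ⁅y, z⁆⁆ * ⁅y, ⁅z, x⁆⁆ * ⁅z, ⁅x, y⁆⁆ ∈ (⊤ : Subgroup G).lowerCentralSeries (k + l + m) := by
  obtain ⟨K, rfl⟩ : ∃ K, k = K + 1 := ⟨k - 1, by omega⟩
  obtain ⟨L, rfl⟩ : ∃ L, l = L + 1 := ⟨l - 1, by omega⟩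
  obtain ⟨M, rfl⟩ : ∃ M, m = M + 1 := ⟨m - 1, by omega⟩
  simp only [Nat.add_sub_cancel] at hx hy hz
  set N : Subgroup G := (⊤ : Subgroup G).lowerCentralSeries (K + 1 + (L + 1) + (M + 1)) with hN
  have hNidx : K + 1 + (L + 1) + (M + 1) = K + L + M + 3 := by omega
  set f : G →* G ⧸ N := QuotientGroup.mk' N with hf
  -- the image subgroups
  set S : ℕ → Subgroup (G ⧸ N) := fun n => ((⊤ : Subgroup G).lowerCentralSeries n).map f with hS
  have hmono : ∀ {i j : ℕ}, i ≤ j → S j ≤ S i := fun hij =>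
    Subgroup.map_mono (Subgroup.lowerCentralSeries_antitone _ hij)
  have hScomm : ∀ (i j : ℕ) (a b : G ⧸ N), a ∈ S i → b ∈ S j → ⁅a, b⁆ ∈ S (i + j + 1) := by
    intro i j a b ha hb
    have : ⁅a, b⁆ ∈ ⁅S i, S j⁆ := Subgroup.commutator_mem_commutator ha hb
    rw [hS] at this ⊢
    simp only [← Subgroup.map_commutator] at this
    exact Subgroup.map_mono (stmt3_lcs_comm j i) this
  have hbot : ∀ a : G ⧸ N, a ∈ S (K + L + M + 3) → a = 1 := by
    intro a ha
    rw [hS, ← hNidx] at ha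
    rcases ha with ⟨g, hg, rfl⟩
    rwa [hf, QuotientGroup.mk'_apply, QuotientGroup.eq_one_iff]
  have htop : ∀ q : G ⧸ N, q ∈ S 0 := by
    intro q
    obtain ⟨g, rfl⟩ := QuotientGroup.mk'_surjective N q
    exact ⟨g, Subgroup.mem_top g, rfl⟩
  -- elements of S (K+L+M+2) are central
  have hcent : ∀ a : G ⧸ N, a ∈ S (K + L + M + 2) → ∀ w : G ⧸ N, ⁅a, w⁆ = 1 := by
    intro a ha w
    exact hbot _ (hScomm _ 0 _ _ ha (htop w))
  have hcomm : ∀ a : G ⧸ N, a ∈ S (K + L + M + 2) → ∀ w : G ⧸ N, Commute a w := by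
    intro a ha w
    exact commutatorElement_eq_one_iff_commute.mp (hcent a ha w)
  -- the images
  set X := f x with hX; set Y := f y with hY; set Z := f z with hZ
  have hXm : X ∈ S K := ⟨x, hx, rfl⟩
  have hYm : Y ∈ S M := ⟨y, hy, rfl⟩
  have hZm : Z ∈ S L := ⟨z, hz, rfl⟩
  -- generic reduction instance
  have key : ∀ (α β γ : ℕ) (a b c : G ⧸ N), α + β + γ = K + L + M →
      a ∈ S α → b ∈ S β → c ∈ S γ → ⁅a, ⁅b⁻¹, c⁆⁆ = ⁅a, ⁅b, c⁆⁆⁻¹ := by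
    intro α β γ a b c habc ha hb hc
    apply stmt3_red
    · -- ⁅a, ⁅⁅b,c⁆,b⁻¹⁆⁆ = 1
      have h1 : ⁅b, c⁆ ∈ S (β + γ + 1) := hScomm _ _ _ _ hb hc
      have h2 : ⁅⁅b, c⁆, b⁻¹⁆ ∈ S (β + γ + 1 + β + 1) :=
        hScomm _ _ _ _ h1 (Subgroup.inv_mem _ hb)
      have h3 : ⁅⁅b, c⁆, b⁻¹⁆ ∈ S (β + γ + 2) := hmono (by omega) h2
      have h4 : ⁅a, ⁅⁅b, c⁆, b⁻¹⁆⁆ ∈ S (α + (β + γ + 2) + 1) := hScomm _ _ _ _ ha h3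
      exact hbot _ (hmono (by omega) h4)
    · -- ⁅⁅b,c⁆, ⁅a,⁅b,c⁆⁆⁆ = 1
      have h1 : ⁅b, c⁆ ∈ S (β + γ + 1) := hScomm _ _ _ _ hb hc
      have h2 : ⁅a, ⁅b, c⁆⁆ ∈ S (α + (β + γ + 1) + 1) := hScomm _ _ _ _ ha h1
      have h3 : ⁅a, ⁅b, c⁆⁆ ∈ S (K + L + M + 2) := hmono (by omega) h2
      exact ((hcomm _ h3 ⁅b, c⁆).symm).commutator_eq
  -- the three central triple commutators
  have hA : ⁅X, ⁅Y, Z⁆⁆ ∈ S (K + L + M + 2) :=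
    hmono (by omega) (hScomm _ _ _ _ hXm (hScomm M L _ _ hYm hZm))
  have hB : ⁅Y, ⁅Z, X⁆⁆ ∈ S (K + L + M + 2) :=
    hmono (by omega) (hScomm _ _ _ _ hYm (hScomm L K _ _ hZm hXm))
  have hC : ⁅Z, ⁅X, Y⁆⁆ ∈ S (K + L + M + 2) :=
    hmono (by omega) (hScomm _ _ _ _ hZm (hScomm K M _ _ hXm hYm))
  -- Hall–Witt, with reductions
  have hwr := stmt3_hw X Y Z
  rw [key K M L X Y Z (by omega) hXm hYm hZm,
      key M L K Y Z X (by omega) hYm hZm hXm,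
      key L K M Z X Y (by omega) hZm hXm hYm] at hwr
  -- strip the conjugations using centrality
  have cA : ∀ w : G ⧸ N, w * ⁅X, ⁅Y, Z⁆⁆⁻¹ * w⁻¹ = ⁅X, ⁅Y, Z⁆⁆⁻¹ := by
    intro w
    rw [((hcomm _ hA w).symm.inv_right).eq]; group
  have cB : ∀ w : G ⧸ N, w * ⁅Y, ⁅Z, X⁆⁆⁻¹ * w⁻¹ = ⁅Y, ⁅Z, X⁆⁆⁻¹ := by
    intro w
    rw [((hcomm _ hB w).symm.inv_right).eq]; group
  have cC : ∀ w : G ⧸ N, w * ⁅Z, ⁅X, Y⁆⁆⁻¹ * w⁻¹ = ⁅Z, ⁅X, Y⁆⁆⁻¹ := by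
    intro w
    rw [((hcomm _ hC w).symm.inv_right).eq]; group
  rw [cA Y, cB Z, cC X] at hwr
  -- hwr : ⁅X,⁅Y,Z⁆⁆⁻¹ * ⁅Y,⁅Z,X⁆⁆⁻¹ * ⁅Z,⁅X,Y⁆⁆⁻¹ = 1
  have main : ⁅X, ⁅Y, Z⁆⁆ * ⁅Y, ⁅Z, X⁆⁆ * ⁅Z, ⁅X, Y⁆⁆ = 1 := by
    have h1 : Commute ⁅X, ⁅Y, Z⁆⁆ ⁅Y, ⁅Z, X⁆⁆ := hcomm _ hA _
    have h2 : Commute ⁅X, ⁅Y, Z⁆⁆ ⁅Z, ⁅X, Y⁆⁆ := hcomm _ hA _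
    have hC' : ⁅Z, ⁅X, Y⁆⁆ = ⁅X, ⁅Y, Z⁆⁆⁻¹ * ⁅Y, ⁅Z, X⁆⁆⁻¹ := by
      have h := mul_eq_one_iff_eq_inv.mp hwr
      rw [inv_inv] at h
      exact h.symm
    calc ⁅X, ⁅Y, Z⁆⁆ * ⁅Y, ⁅Z, X⁆⁆ * ⁅Z, ⁅X, Y⁆⁆
        = ⁅X, ⁅Y, Z⁆⁆ * ⁅Y, ⁅Z, X⁆⁆ * (⁅X, ⁅Y, Z⁆⁆⁻¹ * ⁅Y, ⁅Z, X⁆⁆⁻¹) := by rw [hC']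
      _ = ⁅⁅X, ⁅Y, Z⁆⁆, ⁅Y, ⁅Z, X⁆⁆⁆ := by rw [commutatorElement_def]; group
      _ = 1 := h1.commutator_eq
  -- pull back along the quotient map
  rw [← QuotientGroup.eq_one_iff]
  calc ((⁅x, ⁅y, z⁆⁆ * ⁅y, ⁅z, x⁆⁆ * ⁅z, ⁅x, y⁆⁆ : G) : G ⧸ N)
      = f (⁅x, ⁅y, z⁆⁆ * ⁅y, ⁅z, x⁆⁆ * ⁅z, ⁅x, y⁆⁆) := rfl
    _ = ⁅X, ⁅Y, Z⁆⁆ * ⁅Y, ⁅Z, X⁆⁆ * ⁅Z, ⁅X, Y⁆⁆ := by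
        simp only [map_mul, map_commutatorElement, hX, hY, hZ]
    _ = 1 := main
end

section
/- In a free group F with basis X, let W be a word that is a simple quasi-commutator of length m (a simple commutator of length m with finitely many canceling pairs x x⁻¹ or x⁻¹ x inserted). Then W represents an element of F^(m), and if m > n, the word W is n-trivial in the sense of Definition 3.8. -/
/-- A letter `(x, b)` evaluates to `x` if `b = true` and to `x⁻¹` otherwise. -/
def evalLetter {α : Type*} (p : α × Bool) : FreeGroup α :=
  cond p.2 (FreeGroup.of p.1) (FreeGroup.of p.1)⁻¹

/-- A word (a list of signed letters) represents the product of its letters. -/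
def evalWord {α : Type*} (W : List (α × Bool)) : FreeGroup α :=
  (W.map evalLetter).prod

/-- The formal inverse of a word. -/
def invWord {α : Type*} (W : List (α × Bool)) : List (α × Bool) :=
  (W.map fun p => (p.1, !p.2)).reverse

/-- Simple commutator words: a simple commutator of length 1 is a single signed letter;
a simple commutator of length `k+1` is the word `[W, x^{±1}]` or `[x^{±1}, W]` with `W`
a simple commutator word of length `k`. -/
inductive IsSCWord {α : Type*} : ℕ → List (α × Bool) → Prop
  | base (x : α) (b : Bool) : IsSCWord 1 [(x, b)]
  | left {k : ℕ} {W : List (α × Bool)} (x : α) (b : Bool) :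
      IsSCWord k W → IsSCWord (k + 1) (W ++ [(x, b)] ++ invWord W ++ [(x, !b)])
  | right {k : ℕ} {W : List (α × Bool)} (x : α) (b : Bool) :
      IsSCWord k W → IsSCWord (k + 1) ([(x, b)] ++ W ++ [(x, !b)] ++ invWord W)

/-- Simple quasi-commutator words: obtained from a simple commutator word by finitely
many insertions of canceling pairs `x x⁻¹` or `x⁻¹ x`. -/
inductive IsQSCWord {α : Type*} : ℕ → List (α × Bool) → Prop
  | of {k : ℕ} {W : List (α × Bool)} : IsSCWord k W → IsQSCWord k W
  | insert {k : ℕ} (W₁ W₂ : List (α × Bool)) (x : α) (b : Bool) :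
      IsQSCWord k (W₁ ++ W₂) → IsQSCWord k (W₁ ++ [(x, b), (x, !b)] ++ W₂)

-- The element represented by the word `W` after deleting (replacing by `1`) the
-- letters at the positions in `D`.
open Classical in
noncomputable def wordDelProd {α : Type*} (W : List (α × Bool)) (D : Set ℕ) :
    FreeGroup α :=
  ((List.range W.length).map fun i =>
    if i ∈ D then 1 else (W[i]?).elim 1 evalLetter).prod

/-- A word is `n`-trivial if there are `n+1` pairwise disjoint nonempty sets of
letter-positions such that deleting the letters of any nonempty union of these sets
yields a word representing the identity. -/
def NTrivialWord {α : Type*} (n : ℕ) (W : List (α × Bool)) : Prop :=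
  ∃ C : Fin (n + 1) → Set ℕ,
    (∀ i, (C i).Nonempty) ∧ (∀ i, C i ⊆ Set.Iio W.length) ∧
    (∀ i j, i ≠ j → Disjoint (C i) (C j)) ∧
    ∀ S : Set (Fin (n + 1)), S.Nonempty → wordDelProd W (⋃ i ∈ S, C i) = 1

section Aux
open Classical

variable {α : Type*}

noncomputable def dp : List (α × Bool) → Set ℕ → FreeGroup α
  | [], _ => 1
  | p :: t, D => (if 0 ∈ D then 1 else evalLetter p) * dp t {n | n + 1 ∈ D}

lemma evalLetter_inv (p : α × Bool) : evalLetter (p.1, !p.2) = (evalLetter p)⁻¹ := by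
  rcases p with ⟨x, b⟩; cases b <;> simp [evalLetter]

lemma evalWord_cons (p : α × Bool) (t : List (α × Bool)) :
    evalWord (p :: t) = evalLetter p * evalWord t := by simp [evalWord]

lemma evalWord_append (A B : List (α × Bool)) :
    evalWord (A ++ B) = evalWord A * evalWord B := by simp [evalWord]

lemma invWord_length (W : List (α × Bool)) : (invWord W).length = W.length := by
  simp [invWord]

lemma invWord_concat (t : List (α × Bool)) (p : α × Bool) :
    invWord (t ++ [p]) = (p.1, !p.2) :: invWord t := by simp [invWord]

lemma invWord_cons (p : α × Bool) (t : List (α × Bool)) :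
    invWord (p :: t) = invWord t ++ [(p.1, !p.2)] := by simp [invWord]

lemma evalWord_invWord (W : List (α × Bool)) : evalWord (invWord W) = (evalWord W)⁻¹ := by
  induction W with
  | nil => simp [evalWord, invWord]
  | cons p t ih =>
      rw [invWord_cons, evalWord_append, evalWord_cons, ih]
      simp [evalWord, evalLetter_inv]

lemma wordDelProd_eq_dp (W : List (α × Bool)) (D : Set ℕ) :
    wordDelProd W D = dp W D := by
  induction W generalizing D with
  | nil => simp [wordDelProd, dp]
  | cons p t ih =>
      rw [wordDelProd, dp, ← ih]
      rw [List.length_cons, List.range_succ_eq_map, List.map_cons, List.prod_cons,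
        List.map_map, wordDelProd]
      congr 1

lemma dp_congr {W : List (α × Bool)} {D D' : Set ℕ}
    (h : ∀ i < W.length, (i ∈ D ↔ i ∈ D')) : dp W D = dp W D' := by
  induction W generalizing D D' with
  | nil => rfl
  | cons p t ih =>
      rw [dp, dp]
      have h0 : (0 ∈ D) = (0 ∈ D') := propext (h 0 (by simp))
      rw [h0, ih]
      intro i hi
      exact h (i + 1) (by simpa using Nat.succ_lt_succ hi)

lemma dp_of_not_mem {W : List (α × Bool)} {D : Set ℕ}
    (h : ∀ i < W.length, i ∉ D) : dp W D = evalWord W := by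
  induction W generalizing D with
  | nil => simp [dp, evalWord]
  | cons p t ih =>
      rw [dp, if_neg (h 0 (by simp)), evalWord_cons, ih]
      intro i hi
      exact h (i + 1) (by simpa using Nat.succ_lt_succ hi)

lemma dp_append (A B : List (α × Bool)) (D : Set ℕ) :
    dp (A ++ B) D = dp A D * dp B {n | n + A.length ∈ D} := by
  induction A generalizing D with
  | nil =>
      show dp B D = 1 * dp B _
      rw [one_mul]
      exact dp_congr (by intro i _; simp)
  | cons p t ih =>
      rw [List.cons_append, dp, dp, ih, mul_assoc]
      congr 2

lemma dp_single (p : α × Bool) (D : Set ℕ) :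
    dp [p] D = if 0 ∈ D then 1 else evalLetter p := by
  rw [dp, dp, mul_one]

lemma dp_invWord (W : List (α × Bool)) (D : Set ℕ) :
    dp (invWord W) D = (dp W {i | i < W.length ∧ W.length - 1 - i ∈ D})⁻¹ := by
  induction W using List.reverseRec generalizing D with
  | nil => simp [invWord, dp]
  | append_singleton t p ih =>
      rw [invWord_concat, dp, ih, dp_append, dp_single, mul_inv_rev]
      have e1 : (0 ∈ {n | n + t.length ∈
          ({i | i < (t ++ [p]).length ∧ (t ++ [p]).length - 1 - i ∈ D} : Set ℕ)}) = (0 ∈ D) := by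
        simp
      rw [e1]
      congr 1
      · split
        · simp
        · rw [evalLetter_inv]
      · congr 1
        apply dp_congr
        intro i hi
        simp only [Set.mem_setOf_eq, List.length_append, List.length_singleton]
        constructor
        · rintro ⟨-, h2⟩
          have e : t.length - 1 - i + 1 = t.length + 1 - 1 - i := by omega
          exact ⟨by omega, by rw [← e]; exact h2⟩
        · rintro ⟨-, h2⟩
          have e : t.length - 1 - i + 1 = t.length + 1 - 1 - i := by omega
          exact ⟨hi, by rw [e]; exact h2⟩

end Aux

section Main
open Classical
open commutatorElement

variable {α : Type*}

lemma lcs_comm_left {G : Type*} [Group G] {k : ℕ} (hk : 1 ≤ k) {w : G} (g : G)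
    (hw : w ∈ (⊤ : Subgroup G).lowerCentralSeries (k - 1)) :
    ⁅w, g⁆ ∈ (⊤ : Subgroup G).lowerCentralSeries (k + 1 - 1) := by
  have e : k + 1 - 1 = (k - 1) + 1 := by omega
  rw [e]
  have e2 : (⊤ : Subgroup G).lowerCentralSeries ((k - 1) + 1) = ⁅(⊤ : Subgroup G).lowerCentralSeries (k - 1), ⊤⁆ := rfl
  rw [e2]
  exact Subgroup.commutator_mem_commutator hw (Subgroup.mem_top g)

lemma lcs_comm_right {G : Type*} [Group G] {k : ℕ} (hk : 1 ≤ k) {w : G} (g : G)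
    (hw : w ∈ (⊤ : Subgroup G).lowerCentralSeries (k - 1)) :
    ⁅g, w⁆ ∈ (⊤ : Subgroup G).lowerCentralSeries (k + 1 - 1) := by
  have e : k + 1 - 1 = (k - 1) + 1 := by omega
  rw [e]
  have e2 : (⊤ : Subgroup G).lowerCentralSeries ((k - 1) + 1) = ⁅(⊤ : Subgroup G).lowerCentralSeries (k - 1), ⊤⁆ := rfl
  rw [e2, Subgroup.commutator_comm]
  exact Subgroup.commutator_mem_commutator (Subgroup.mem_top g) hw

/-- Strong triviality: `m` disjoint nonempty classes whose every nonempty union deletes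
to the identity. -/
def StrongTriv (m : ℕ) (W : List (α × Bool)) : Prop :=
  ∃ C : Fin m → Set ℕ,
    (∀ i, (C i).Nonempty) ∧ (∀ i, C i ⊆ Set.Iio W.length) ∧
    (∀ i j, i ≠ j → Disjoint (C i) (C j)) ∧
    ∀ S : Set (Fin m), S.Nonempty → wordDelProd W (⋃ i ∈ S, C i) = 1

lemma dp_comm_shape_l (Wl : List (α × Bool)) (q r : α × Bool) (D : Set ℕ) :
    dp (Wl ++ [q] ++ invWord Wl ++ [r]) D =
      dp Wl D * (if Wl.length ∈ D then 1 else evalLetter q)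
        * (dp Wl {i | i < Wl.length ∧ 2 * Wl.length - i ∈ D})⁻¹
        * (if 2 * Wl.length + 1 ∈ D then 1 else evalLetter r) := by
  rw [dp_append, dp_append, dp_append, dp_single, dp_single, dp_invWord]
  have c1 : (0 ∈ {n | n + Wl.length ∈ D}) = (Wl.length ∈ D) := by
    simp [Set.mem_setOf_eq]
  have c2 : (0 ∈ {n | n + ((Wl ++ [q]) ++ invWord Wl).length ∈ D}) = (2 * Wl.length + 1 ∈ D) := by
    simp only [Set.mem_setOf_eq, List.length_append, List.length_singleton, invWord_length,
      Nat.zero_add]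
    have e : Wl.length + 1 + Wl.length = 2 * Wl.length + 1 := by omega
    rw [e]
  rw [c1, c2]
  have c3 : dp Wl {i | i < Wl.length ∧ Wl.length - 1 - i ∈ {n | n + (Wl ++ [q]).length ∈ D}}
      = dp Wl {i | i < Wl.length ∧ 2 * Wl.length - i ∈ D} := by
    apply dp_congr
    intro i hi
    simp only [Set.mem_setOf_eq, List.length_append, List.length_singleton]
    have e : Wl.length - 1 - i + (Wl.length + 1) = 2 * Wl.length - i := by omega
    rw [e]
  rw [c3]

lemma dp_comm_shape_r (Wl : List (α × Bool)) (q r : α × Bool) (D : Set ℕ) :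
    dp ([q] ++ Wl ++ [r] ++ invWord Wl) D =
      (if 0 ∈ D then 1 else evalLetter q) * dp Wl {i | i < Wl.length ∧ i + 1 ∈ D}
        * (if Wl.length + 1 ∈ D then 1 else evalLetter r)
        * (dp Wl {i | i < Wl.length ∧ 2 * Wl.length + 1 - i ∈ D})⁻¹ := by
  rw [dp_append, dp_append, dp_append, dp_single, dp_single, dp_invWord]
  have c1 : (0 ∈ {n | n + ([q] ++ Wl).length ∈ D}) = (Wl.length + 1 ∈ D) := by
    simp only [Set.mem_setOf_eq, List.length_append, List.length_singleton, Nat.zero_add]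
    have e : 1 + Wl.length = Wl.length + 1 := by omega
    rw [e]
  rw [c1]
  have c2 : dp Wl {n | n + [q].length ∈ D} = dp Wl {i | i < Wl.length ∧ i + 1 ∈ D} := by
    apply dp_congr
    intro i hi
    simp [Set.mem_setOf_eq, hi]
  rw [c2]
  have c3 : dp Wl {i | i < Wl.length ∧
        Wl.length - 1 - i ∈ {n | n + (([q] ++ Wl) ++ [r]).length ∈ D}}
      = dp Wl {i | i < Wl.length ∧ 2 * Wl.length + 1 - i ∈ D} := by
    apply dp_congr
    intro i hi
    simp only [Set.mem_setOf_eq, List.length_append, List.length_singleton]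
    have e : Wl.length - 1 - i + (1 + Wl.length + 1) = 2 * Wl.length + 1 - i := by omega
    rw [e]
  rw [c3]

lemma dp_insert_shape (W₁ W₂ : List (α × Bool)) (x : α) (b : Bool) (D : Set ℕ) :
    dp (W₁ ++ [(x, b), (x, !b)] ++ W₂) D =
      dp W₁ D * ((if W₁.length ∈ D then 1 else evalLetter (x, b)) *
        (if W₁.length + 1 ∈ D then 1 else evalLetter (x, !b)))
        * dp W₂ {n | n + (W₁.length + 2) ∈ D} := by
  rw [dp_append, dp_append]
  congr 1
  · congr 1
    rw [dp, dp, dp, mul_one]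
    have c1 : (0 ∈ {n | n + W₁.length ∈ D}) = (W₁.length ∈ D) := by
      simp [Set.mem_setOf_eq]
    have c2 : (0 ∈ {n | n + 1 ∈ {n | n + W₁.length ∈ D}}) = (W₁.length + 1 ∈ D) := by
      simp only [Set.mem_setOf_eq, Nat.zero_add]
      have e : 1 + W₁.length = W₁.length + 1 := by omega
      rw [e]
    rw [c1, c2]
  · apply dp_congr
    intro i hi
    simp only [Set.mem_setOf_eq, List.length_append, List.length_cons, List.length_nil]

end Main

section Big
open Classical
open commutatorElement

variable {α : Type*}

lemma sc_strong {k : ℕ} {W : List (α × Bool)} (h : IsSCWord k W) :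
    1 ≤ k ∧ 0 < W.length ∧
      evalWord W ∈ (⊤ : Subgroup (FreeGroup α)).lowerCentralSeries (k - 1) ∧ StrongTriv k W := by
  induction h with
  | base x b =>
      refine ⟨le_refl 1, by simp, ?_, ?_⟩
      · rw [show (1 - 1 : ℕ) = 0 from rfl, Subgroup.lowerCentralSeries_zero]
        trivial
      · refine ⟨fun _ => {0}, fun i => ⟨0, rfl⟩, ?_, ?_, ?_⟩
        · intro i p hp
          simp only [Set.mem_singleton_iff] at hp
          simp [hp]
        · intro i j hij; exact absurd (Subsingleton.elim i j) hij
        · intro S hS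
          obtain ⟨i0, hi0⟩ := hS
          have hU : (⋃ i ∈ S, ({0} : Set ℕ)) = {0} := by
            apply Set.ext; intro a
            simp only [Set.mem_iUnion, Set.mem_singleton_iff]
            exact ⟨fun ⟨i, _, ha⟩ => ha, fun ha => ⟨i0, hi0, ha⟩⟩
          rw [hU, wordDelProd_eq_dp, dp, dp]
          simp
  | @left k W x b hW ih =>
      obtain ⟨hk, hL, hmem, C, hne, hsub, hdis, hdel⟩ := ih
      set L := W.length with hLdef
      have hlen : (W ++ [(x, b)] ++ invWord W ++ [(x, !b)]).length = 2 * L + 2 := by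
        simp [invWord_length]; omega
      have heinv : evalLetter (x, !b) = (evalLetter (x, b))⁻¹ := evalLetter_inv (x, b)
      refine ⟨by omega, by rw [hlen]; omega, ?_, ?_⟩
      · have he : evalWord (W ++ [(x, b)] ++ invWord W ++ [(x, !b)])
            = ⁅evalWord W, evalLetter (x, b)⁆ := by
          rw [evalWord_append, evalWord_append, evalWord_append, evalWord_invWord,
            commutatorElement_def]
          simp [evalWord, heinv]
        rw [he]
        exact lcs_comm_left hk _ hmem
      · -- StrongTriv (k+1)
        set C' : Fin (k + 1) → Set ℕ :=
          Fin.snoc (fun j => C j ∪ (fun p => 2 * L - p) '' C j) {L, 2 * L + 1} with hC'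
        have hCl : ∀ (j : Fin k) (p : ℕ), p ∈ C j → p < L := fun j p hp => hsub j hp
        refine ⟨C', ?_, ?_, ?_, ?_⟩
        · intro i
          induction i using Fin.lastCases with
          | last => exact ⟨L, by simp [hC', Fin.snoc_last]⟩
          | cast j =>
              obtain ⟨p, hp⟩ := hne j
              exact ⟨p, by simp only [hC', Fin.snoc_castSucc]; exact Or.inl hp⟩
        · intro i
          rw [hlen]
          induction i using Fin.lastCases with
          | last =>
              intro a ha
              simp only [hC', Fin.snoc_last, Set.mem_insert_iff, Set.mem_singleton_iff] at ha
              simp only [Set.mem_Iio]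
              omega
          | cast j =>
              intro a ha
              simp only [hC', Fin.snoc_castSucc, Set.mem_union, Set.mem_image] at ha
              simp only [Set.mem_Iio]
              rcases ha with h1 | ⟨p, hp, hpe⟩
              · have := hCl j a h1; omega
              · have := hCl j p hp; omega
        · intro i j hij
          rw [Set.disjoint_left]
          intro a hai haj
          induction i using Fin.lastCases with
          | last =>
              induction j using Fin.lastCases with
              | last => exact hij rfl
              | cast j' =>
                  simp only [hC', Fin.snoc_last, Set.mem_insert_iff,
                    Set.mem_singleton_iff] at hai
                  simp only [hC', Fin.snoc_castSucc, Set.mem_union, Set.mem_image] at haj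
                  rcases haj with h1 | ⟨p, hp, hpe⟩
                  · have := hCl j' a h1; omega
                  · have := hCl j' p hp; omega
          | cast i' =>
              induction j using Fin.lastCases with
              | last =>
                  simp only [hC', Fin.snoc_last, Set.mem_insert_iff,
                    Set.mem_singleton_iff] at haj
                  simp only [hC', Fin.snoc_castSucc, Set.mem_union, Set.mem_image] at hai
                  rcases hai with h1 | ⟨p, hp, hpe⟩
                  · have := hCl i' a h1; omega
                  · have := hCl i' p hp; omega
              | cast j' =>
                  have hij' : i' ≠ j' := fun e => hij (by rw [e])
                  have hd := hdis i' j' hij'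
                  rw [Set.disjoint_left] at hd
                  simp only [hC', Fin.snoc_castSucc, Set.mem_union, Set.mem_image] at hai haj
                  rcases hai with h1 | ⟨p, hp, hpe⟩
                  · rcases haj with h2 | ⟨q, hq, hqe⟩
                    · exact hd h1 h2
                    · have := hCl i' a h1; have := hCl j' q hq; omega
                  · rcases haj with h2 | ⟨q, hq, hqe⟩
                    · have := hCl i' p hp; have := hCl j' a h2; omega
                    · have hpL := hCl i' p hp; have hqL := hCl j' q hq
                      have : p = q := by omega
                      exact hd hp (this ▸ hq)
        · intro S hS
          set D : Set ℕ := ⋃ i ∈ S, C' i with hD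
          set S' : Set (Fin k) := Fin.castSucc ⁻¹' S with hS'
          set D₀ : Set ℕ := ⋃ j ∈ S', C j with hD₀
          have memD : ∀ a : ℕ, a ∈ D ↔
              ((∃ j : Fin k, j ∈ S' ∧ (a ∈ C j ∨ ∃ p ∈ C j, 2 * L - p = a)) ∨
               (Fin.last k ∈ S ∧ (a = L ∨ a = 2 * L + 1))) := by
            intro a
            simp only [hD, Set.mem_iUnion]
            constructor
            · rintro ⟨i, hiS, hai⟩
              induction i using Fin.lastCases with
              | last =>
                  simp only [hC', Fin.snoc_last, Set.mem_insert_iff,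
                    Set.mem_singleton_iff] at hai
                  exact Or.inr ⟨hiS, hai⟩
              | cast j =>
                  simp only [hC', Fin.snoc_castSucc, Set.mem_union, Set.mem_image] at hai
                  exact Or.inl ⟨j, hiS, hai⟩
            · rintro (⟨j, hjS, hj⟩ | ⟨hl, hal⟩)
              · refine ⟨Fin.castSucc j, hjS, ?_⟩
                simp only [hC', Fin.snoc_castSucc, Set.mem_union, Set.mem_image]
                exact hj
              · refine ⟨Fin.last k, hl, ?_⟩
                simp only [hC', Fin.snoc_last, Set.mem_insert_iff, Set.mem_singleton_iff]
                exact hal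
          have memD₀ : ∀ a : ℕ, a ∈ D₀ ↔ ∃ j : Fin k, j ∈ S' ∧ a ∈ C j := by
            intro a; simp [hD₀, Set.mem_iUnion]
          have hD_low : ∀ a : ℕ, a < L → (a ∈ D ↔ a ∈ D₀) := by
            intro a haL
            rw [memD, memD₀]
            constructor
            · rintro (⟨j, hjS, h1 | ⟨p, hp, hpe⟩⟩ | ⟨-, h⟩)
              · exact ⟨j, hjS, h1⟩
              · have := hCl j p hp; omega
              · omega
            · rintro ⟨j, hjS, hj⟩; exact Or.inl ⟨j, hjS, Or.inl hj⟩
          have hD_mir : ∀ a : ℕ, a < L → (2 * L - a ∈ D ↔ a ∈ D₀) := by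
            intro a haL
            rw [memD, memD₀]
            constructor
            · rintro (⟨j, hjS, h1 | ⟨p, hp, hpe⟩⟩ | ⟨-, h⟩)
              · have := hCl j _ h1; omega
              · have := hCl j p hp
                have : p = a := by omega
                exact ⟨j, hjS, this ▸ hp⟩
              · omega
            · rintro ⟨j, hjS, hj⟩
              exact Or.inl ⟨j, hjS, Or.inr ⟨a, hj, rfl⟩⟩
          have hD_L : (L ∈ D) ↔ Fin.last k ∈ S := by
            rw [memD]
            constructor
            · rintro (⟨j, hjS, h1 | ⟨p, hp, hpe⟩⟩ | ⟨hl, -⟩)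
              · have := hCl j _ h1; omega
              · have := hCl j p hp; omega
              · exact hl
            · intro hl; exact Or.inr ⟨hl, Or.inl rfl⟩
          have hD_R : (2 * L + 1 ∈ D) ↔ Fin.last k ∈ S := by
            rw [memD]
            constructor
            · rintro (⟨j, hjS, h1 | ⟨p, hp, hpe⟩⟩ | ⟨hl, -⟩)
              · have := hCl j _ h1; omega
              · have := hCl j p hp; omega
              · exact hl
            · intro hl; exact Or.inr ⟨hl, Or.inr rfl⟩
          rw [wordDelProd_eq_dp, dp_comm_shape_l]
          have e1 : dp W D = dp W D₀ := dp_congr (fun i hi => hD_low i hi)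
          have e2 : dp W {i | i < W.length ∧ 2 * W.length - i ∈ D} = dp W D₀ := by
            apply dp_congr
            intro i hi
            simp only [Set.mem_setOf_eq]
            rw [← hLdef]
            constructor
            · rintro ⟨-, h2⟩; exact (hD_mir i hi).1 h2
            · intro h1; exact ⟨hi, (hD_mir i hi).2 h1⟩
          rw [← hLdef, e1, e2]
          by_cases hlast : Fin.last k ∈ S
          · rw [if_pos (hD_L.2 hlast), if_pos (hD_R.2 hlast)]
            group
          · have hS'ne : S'.Nonempty := by
              obtain ⟨i0, hi0⟩ := hS
              induction i0 using Fin.lastCases with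
              | last => exact absurd hi0 hlast
              | cast j => exact ⟨j, hi0⟩
            have hdp0 : dp W D₀ = 1 := by
              rw [← wordDelProd_eq_dp]; exact hdel S' hS'ne
            rw [hdp0, if_neg (fun hc => hlast (hD_L.1 hc)),
              if_neg (fun hc => hlast (hD_R.1 hc)), heinv]
            group
  | @right k W x b hW ih =>
      obtain ⟨hk, hL, hmem, C, hne, hsub, hdis, hdel⟩ := ih
      set L := W.length with hLdef
      have hlen : ([(x, b)] ++ W ++ [(x, !b)] ++ invWord W).length = 2 * L + 2 := by
        simp [invWord_length]; omega
      have heinv : evalLetter (x, !b) = (evalLetter (x, b))⁻¹ := evalLetter_inv (x, b)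
      refine ⟨by omega, by rw [hlen]; omega, ?_, ?_⟩
      · have he : evalWord ([(x, b)] ++ W ++ [(x, !b)] ++ invWord W)
            = ⁅evalLetter (x, b), evalWord W⁆ := by
          rw [evalWord_append, evalWord_append, evalWord_append, evalWord_invWord,
            commutatorElement_def]
          simp [evalWord, heinv]
        rw [he]
        exact lcs_comm_right hk _ hmem
      · -- StrongTriv (k+1)
        set C' : Fin (k + 1) → Set ℕ :=
          Fin.snoc (fun j => (fun p => p + 1) '' C j ∪ (fun p => 2 * L + 1 - p) '' C j)
            {0, L + 1} with hC'
        have hCl : ∀ (j : Fin k) (p : ℕ), p ∈ C j → p < L := fun j p hp => hsub j hp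
        refine ⟨C', ?_, ?_, ?_, ?_⟩
        · intro i
          induction i using Fin.lastCases with
          | last => exact ⟨0, by simp [hC', Fin.snoc_last]⟩
          | cast j =>
              obtain ⟨p, hp⟩ := hne j
              exact ⟨p + 1, by
                simp only [hC', Fin.snoc_castSucc, Set.mem_union, Set.mem_image]
                exact Or.inl ⟨p, hp, rfl⟩⟩
        · intro i
          rw [hlen]
          induction i using Fin.lastCases with
          | last =>
              intro a ha
              simp only [hC', Fin.snoc_last, Set.mem_insert_iff, Set.mem_singleton_iff] at ha
              simp only [Set.mem_Iio]
              omega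
          | cast j =>
              intro a ha
              simp only [hC', Fin.snoc_castSucc, Set.mem_union, Set.mem_image] at ha
              simp only [Set.mem_Iio]
              rcases ha with ⟨p, hp, hpe⟩ | ⟨p, hp, hpe⟩
              · have := hCl j p hp; omega
              · have := hCl j p hp; omega
        · intro i j hij
          rw [Set.disjoint_left]
          intro a hai haj
          induction i using Fin.lastCases with
          | last =>
              induction j using Fin.lastCases with
              | last => exact hij rfl
              | cast j' =>
                  simp only [hC', Fin.snoc_last, Set.mem_insert_iff,
                    Set.mem_singleton_iff] at hai
                  simp only [hC', Fin.snoc_castSucc, Set.mem_union, Set.mem_image] at haj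
                  rcases haj with ⟨p, hp, hpe⟩ | ⟨p, hp, hpe⟩ <;>
                    (have := hCl j' p hp; omega)
          | cast i' =>
              induction j using Fin.lastCases with
              | last =>
                  simp only [hC', Fin.snoc_last, Set.mem_insert_iff,
                    Set.mem_singleton_iff] at haj
                  simp only [hC', Fin.snoc_castSucc, Set.mem_union, Set.mem_image] at hai
                  rcases hai with ⟨p, hp, hpe⟩ | ⟨p, hp, hpe⟩ <;>
                    (have := hCl i' p hp; omega)
              | cast j' =>
                  have hij' : i' ≠ j' := fun e => hij (by rw [e])
                  have hd := hdis i' j' hij'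
                  rw [Set.disjoint_left] at hd
                  simp only [hC', Fin.snoc_castSucc, Set.mem_union, Set.mem_image] at hai haj
                  rcases hai with ⟨p, hp, hpe⟩ | ⟨p, hp, hpe⟩ <;>
                    rcases haj with ⟨q, hq, hqe⟩ | ⟨q, hq, hqe⟩
                  · have : p = q := by omega
                    exact hd hp (this ▸ hq)
                  · have := hCl i' p hp; have := hCl j' q hq; omega
                  · have := hCl i' p hp; have := hCl j' q hq; omega
                  · have hpL := hCl i' p hp; have hqL := hCl j' q hq
                    have : p = q := by omega
                    exact hd hp (this ▸ hq)
        · intro S hS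
          set D : Set ℕ := ⋃ i ∈ S, C' i with hD
          set S' : Set (Fin k) := Fin.castSucc ⁻¹' S with hS'
          set D₀ : Set ℕ := ⋃ j ∈ S', C j with hD₀
          have memD : ∀ a : ℕ, a ∈ D ↔
              ((∃ j : Fin k, j ∈ S' ∧
                 ((∃ p ∈ C j, p + 1 = a) ∨ ∃ p ∈ C j, 2 * L + 1 - p = a)) ∨
               (Fin.last k ∈ S ∧ (a = 0 ∨ a = L + 1))) := by
            intro a
            simp only [hD, Set.mem_iUnion]
            constructor
            · rintro ⟨i, hiS, hai⟩
              induction i using Fin.lastCases with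
              | last =>
                  simp only [hC', Fin.snoc_last, Set.mem_insert_iff,
                    Set.mem_singleton_iff] at hai
                  exact Or.inr ⟨hiS, hai⟩
              | cast j =>
                  simp only [hC', Fin.snoc_castSucc, Set.mem_union, Set.mem_image] at hai
                  exact Or.inl ⟨j, hiS, hai⟩
            · rintro (⟨j, hjS, hj⟩ | ⟨hl, hal⟩)
              · refine ⟨Fin.castSucc j, hjS, ?_⟩
                simp only [hC', Fin.snoc_castSucc, Set.mem_union, Set.mem_image]
                exact hj
              · refine ⟨Fin.last k, hl, ?_⟩
                simp only [hC', Fin.snoc_last, Set.mem_insert_iff, Set.mem_singleton_iff]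
                exact hal
          have memD₀ : ∀ a : ℕ, a ∈ D₀ ↔ ∃ j : Fin k, j ∈ S' ∧ a ∈ C j := by
            intro a; simp [hD₀, Set.mem_iUnion]
          have hD_sh : ∀ a : ℕ, a < L → (a + 1 ∈ D ↔ a ∈ D₀) := by
            intro a haL
            rw [memD, memD₀]
            constructor
            · rintro (⟨j, hjS, ⟨p, hp, hpe⟩ | ⟨p, hp, hpe⟩⟩ | ⟨-, h⟩)
              · have : p = a := by omega
                exact ⟨j, hjS, this ▸ hp⟩
              · have := hCl j p hp; omega
              · omega
            · rintro ⟨j, hjS, hj⟩; exact Or.inl ⟨j, hjS, Or.inl ⟨a, hj, rfl⟩⟩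
          have hD_mir : ∀ a : ℕ, a < L → (2 * L + 1 - a ∈ D ↔ a ∈ D₀) := by
            intro a haL
            rw [memD, memD₀]
            constructor
            · rintro (⟨j, hjS, ⟨p, hp, hpe⟩ | ⟨p, hp, hpe⟩⟩ | ⟨-, h⟩)
              · have := hCl j p hp; omega
              · have := hCl j p hp
                have : p = a := by omega
                exact ⟨j, hjS, this ▸ hp⟩
              · omega
            · rintro ⟨j, hjS, hj⟩
              exact Or.inl ⟨j, hjS, Or.inr ⟨a, hj, rfl⟩⟩
          have hD_0 : (0 ∈ D) ↔ Fin.last k ∈ S := by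
            rw [memD]
            constructor
            · rintro (⟨j, hjS, ⟨p, hp, hpe⟩ | ⟨p, hp, hpe⟩⟩ | ⟨hl, -⟩)
              · omega
              · have := hCl j p hp; omega
              · exact hl
            · intro hl; exact Or.inr ⟨hl, Or.inl rfl⟩
          have hD_L1 : (L + 1 ∈ D) ↔ Fin.last k ∈ S := by
            rw [memD]
            constructor
            · rintro (⟨j, hjS, ⟨p, hp, hpe⟩ | ⟨p, hp, hpe⟩⟩ | ⟨hl, -⟩)
              · have := hCl j p hp; omega
              · have := hCl j p hp; omega
              · exact hl
            · intro hl; exact Or.inr ⟨hl, Or.inr rfl⟩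
          rw [wordDelProd_eq_dp, dp_comm_shape_r]
          have e1 : dp W {i | i < W.length ∧ i + 1 ∈ D} = dp W D₀ := by
            apply dp_congr
            intro i hi
            simp only [Set.mem_setOf_eq]
            constructor
            · rintro ⟨-, h2⟩; exact (hD_sh i hi).1 h2
            · intro h1; exact ⟨hi, (hD_sh i hi).2 h1⟩
          have e2 : dp W {i | i < W.length ∧ 2 * W.length + 1 - i ∈ D} = dp W D₀ := by
            apply dp_congr
            intro i hi
            simp only [Set.mem_setOf_eq]
            rw [← hLdef]
            constructor
            · rintro ⟨-, h2⟩; exact (hD_mir i hi).1 h2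
            · intro h1; exact ⟨hi, (hD_mir i hi).2 h1⟩
          rw [← hLdef, e1, e2]
          by_cases hlast : Fin.last k ∈ S
          · rw [if_pos (hD_0.2 hlast), if_pos (hD_L1.2 hlast)]
            group
          · have hS'ne : S'.Nonempty := by
              obtain ⟨i0, hi0⟩ := hS
              induction i0 using Fin.lastCases with
              | last => exact absurd hi0 hlast
              | cast j => exact ⟨j, hi0⟩
            have hdp0 : dp W D₀ = 1 := by
              rw [← wordDelProd_eq_dp]; exact hdel S' hS'ne
            rw [hdp0, if_neg (fun hc => hlast (hD_0.1 hc)),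
              if_neg (fun hc => hlast (hD_L1.1 hc)), heinv]
            group

end Big

section Final
open Classical

variable {α : Type*}

lemma qsc_strong {k : ℕ} {W : List (α × Bool)} (h : IsQSCWord k W) :
    1 ≤ k ∧ 0 < W.length ∧
      evalWord W ∈ (⊤ : Subgroup (FreeGroup α)).lowerCentralSeries (k - 1) ∧ StrongTriv k W := by
  induction h with
  | of hsc => exact sc_strong hsc
  | insert W₁ W₂ x b hq ih =>
      obtain ⟨hk, hL, hmem, C, hne, hsub, hdis, hdel⟩ := ih
      set L₁ := W₁.length with hL₁
      set L₂ := W₂.length with hL₂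
      have hLL : (W₁ ++ W₂).length = L₁ + L₂ := by simp [hL₁, hL₂]
      have hlen : (W₁ ++ [(x, b), (x, !b)] ++ W₂).length = L₁ + L₂ + 2 := by
        simp; omega
      have heinv : evalLetter (x, !b) = (evalLetter (x, b))⁻¹ := evalLetter_inv (x, b)
      refine ⟨hk, by rw [hlen]; omega, ?_, ?_⟩
      · have he : evalWord (W₁ ++ [(x, b), (x, !b)] ++ W₂) = evalWord (W₁ ++ W₂) := by
          rw [evalWord_append, evalWord_append, evalWord_append]
          have hmid : evalWord [(x, b), (x, !b)] = 1 := by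
            simp [evalWord, heinv]
          rw [hmid, mul_one]
        rw [he]
        exact hmem
      · set f : ℕ → ℕ := fun p => if p < L₁ then p else p + 2 with hf
        have hCl : ∀ (j : Fin k) (p : ℕ), p ∈ C j → p < L₁ + L₂ := by
          intro j p hp
          have := hsub j hp
          rw [Set.mem_Iio, hLL] at this
          exact this
        refine ⟨fun i => f '' C i, fun i => (hne i).image f, ?_, ?_, ?_⟩
        · intro i
          rintro a ⟨p, hp, rfl⟩
          rw [hlen]
          have := hCl i p hp
          simp only [Set.mem_Iio, hf]
          split_ifs <;> omega
        · intro i j hij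
          have hd := hdis i j hij
          rw [Set.disjoint_left] at hd ⊢
          rintro a ⟨p, hp, rfl⟩ ⟨q, hq, hqe⟩
          have : p = q := by
            simp only [hf] at hqe
            split_ifs at hqe <;> omega
          exact hd hp (this ▸ hq)
        · intro S hS
          set D₀ : Set ℕ := ⋃ i ∈ S, C i with hD₀
          set D : Set ℕ := ⋃ i ∈ S, f '' C i with hD
          have hD₀L : ∀ p ∈ D₀, p < L₁ + L₂ := by
            intro p hp
            rw [hD₀, Set.mem_iUnion₂] at hp
            obtain ⟨i, hiS, hpi⟩ := hp
            exact hCl i p hpi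
          have memD : ∀ a : ℕ, a ∈ D ↔ ∃ p ∈ D₀, f p = a := by
            intro a
            simp only [hD, hD₀, Set.mem_iUnion, Set.mem_image]
            constructor
            · rintro ⟨i, hiS, p, hp, rfl⟩
              exact ⟨p, ⟨i, hiS, hp⟩, rfl⟩
            · rintro ⟨p, ⟨i, hiS, hp⟩, rfl⟩
              exact ⟨i, hiS, p, hp, rfl⟩
          have hlow : ∀ a : ℕ, a < L₁ → (a ∈ D ↔ a ∈ D₀) := by
            intro a ha
            rw [memD]
            constructor
            · rintro ⟨p, hp, hpe⟩
              have : p = a := by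
                simp only [hf] at hpe
                split_ifs at hpe <;> omega
              exact this ▸ hp
            · intro haD
              exact ⟨a, haD, by simp only [hf]; rw [if_pos ha]⟩
          have hmid0 : L₁ ∉ D := by
            rw [memD]
            rintro ⟨p, hp, hpe⟩
            simp only [hf] at hpe
            split_ifs at hpe <;> omega
          have hmid1 : L₁ + 1 ∉ D := by
            rw [memD]
            rintro ⟨p, hp, hpe⟩
            simp only [hf] at hpe
            split_ifs at hpe <;> omega
          have hshift : ∀ n : ℕ, (n + (L₁ + 2) ∈ D ↔ n + L₁ ∈ D₀) := by
            intro n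
            rw [memD]
            constructor
            · rintro ⟨p, hp, hpe⟩
              have : p = n + L₁ := by
                simp only [hf] at hpe
                split_ifs at hpe <;> omega
              exact this ▸ hp
            · intro hmem'
              refine ⟨n + L₁, hmem', ?_⟩
              simp only [hf]
              rw [if_neg (by omega)]
              omega
          rw [wordDelProd_eq_dp, dp_insert_shape, ← hL₁]
          rw [if_neg hmid0, if_neg hmid1, heinv, mul_inv_cancel, mul_one]
          have e1 : dp W₁ D = dp W₁ D₀ := dp_congr (fun i hi => hlow i hi)
          have e2 : dp W₂ {n | n + (L₁ + 2) ∈ D} = dp W₂ {n | n + L₁ ∈ D₀} := by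
            apply dp_congr
            intro i hi
            exact hshift i
          rw [e1, e2]
          have := hdel S hS
          rw [wordDelProd_eq_dp, dp_append] at this
          rw [← hL₁] at this
          exact this

lemma strong_to_ntrivial {m n : ℕ} {W : List (α × Bool)} (hnm : n < m)
    (h : StrongTriv m W) : NTrivialWord n W := by
  obtain ⟨C, hne, hsub, hdis, hdel⟩ := h
  set g : Fin m → Fin (n + 1) := fun j => ⟨min j.val n, by omega⟩ with hg
  have hgi : ∀ i : Fin (n + 1), g ⟨i.val, by omega⟩ = i := by
    intro i
    apply Fin.ext
    simp only [hg]
    exact min_eq_left (Nat.lt_succ_iff.1 i.isLt)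
  refine ⟨fun i => ⋃ j ∈ {j : Fin m | g j = i}, C j, ?_, ?_, ?_, ?_⟩
  · intro i
    obtain ⟨p, hp⟩ := hne ⟨i.val, by omega⟩
    exact ⟨p, Set.mem_biUnion (hgi i) hp⟩
  · intro i
    exact Set.iUnion₂_subset fun j _ => hsub j
  · intro i j hij
    rw [Set.disjoint_left]
    intro a hai haj
    rw [Set.mem_iUnion₂] at hai haj
    obtain ⟨p, hpi, hap⟩ := hai
    obtain ⟨q, hqj, haq⟩ := haj
    have hpq : p ≠ q := by
      intro e
      rw [e] at hpi
      exact hij (hpi.symm.trans hqj)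
    exact (Set.disjoint_left.1 (hdis p q hpq)) hap haq
  · intro S hS
    have hU : (⋃ i ∈ S, ⋃ j ∈ {j : Fin m | g j = i}, C j) = ⋃ j ∈ g ⁻¹' S, C j := by
      ext a
      simp only [Set.mem_iUnion, Set.mem_setOf_eq, Set.mem_preimage]
      constructor
      · rintro ⟨i, hiS, j, hgj, haj⟩
        exact ⟨j, by rw [hgj]; exact hiS, haj⟩
      · rintro ⟨j, hjS, haj⟩
        exact ⟨g j, hjS, j, rfl, haj⟩
    rw [hU]
    apply hdel
    obtain ⟨i0, hi0⟩ := hS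
    exact ⟨⟨i0.val, by omega⟩, by rw [Set.mem_preimage, hgi i0]; exact hi0⟩

end Final


/-- A simple quasi-commutator word of length `m` represents an element of
`F^(m)` (`= lowerCentralSeries F (m-1)` in Mathlib's indexing), and if `m > n` then the
word is `n`-trivial. -/
theorem stmt_16 {α : Type*} (m : ℕ) (hm : 1 ≤ m) (W : List (α × Bool))
    (h : IsQSCWord m W) :
    evalWord W ∈ (⊤ : Subgroup (FreeGroup α)).lowerCentralSeries (m - 1) ∧
    ∀ n : ℕ, n < m → NTrivialWord n W := by
  obtain ⟨-, -, hmem, hstrong⟩ := qsc_strong h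
  exact ⟨hmem, fun n hn => strong_to_ntrivial hn hstrong⟩
end
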